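/- Let (C, E, s) be an extriangulated category satisfying Condition (WIC). Given a morphism of E-triangles (a, b, c) from A →x B →y C --δ--> to A' →x' B' →y' C' --δ'-->, if both a and c are deflations, then there exists a deflation b': B → B' such that (a, b', c) is also a morphism of E-triangles between the same two E-triangles. -/

import Mathlib

open CategoryTheory Limits

universe w v u

/-- An extriangulated category structure on an additive category `𝒞`, in the sense of
Nakaoka–Palu: a biadditive `Ab`-valued functor `E` together with an additive realization,
encoded via the predicate `IsTriangle x y δ` meaning that `A ⟶x B ⟶y X` realizes
`δ ∈ E(X,A)`, satisfying (ET1)–(ET4) and their duals. -/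
structure ExtriangulatedStructure (𝒞 : Type u) [Category.{v} 𝒞] [Preadditive 𝒞]
    [HasBinaryBiproducts 𝒞] where
  E : 𝒞 → 𝒞 → AddCommGrpCat.{w}
  pull : ∀ {X' X A : 𝒞}, (X' ⟶ X) → E X A → E X' A
  push : ∀ {X A A' : 𝒞}, (A ⟶ A') → E X A → E X A'
  pull_id : ∀ {X A : 𝒞} (δ : E X A), pull (𝟙 X) δ = δ
  push_id : ∀ {X A : 𝒞} (δ : E X A), push (𝟙 A) δ = δ
  pull_comp : ∀ {X'' X' X A : 𝒞} (c' : X'' ⟶ X') (c : X' ⟶ X) (δ : E X A),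
      pull (c' ≫ c) δ = pull c' (pull c δ)
  push_comp : ∀ {X A A' A'' : 𝒞} (a : A ⟶ A') (a' : A' ⟶ A'') (δ : E X A),
      push (a ≫ a') δ = push a' (push a δ)
  pull_push : ∀ {X' X A A' : 𝒞} (c : X' ⟶ X) (a : A ⟶ A') (δ : E X A),
      pull c (push a δ) = push a (pull c δ)
  pull_add : ∀ {X' X A : 𝒞} (c : X' ⟶ X) (δ δ' : E X A),
      pull c (δ + δ') = pull c δ + pull c δ'
  push_add : ∀ {X A A' : 𝒞} (a : A ⟶ A') (δ δ' : E X A),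
      push a (δ + δ') = push a δ + push a δ'
  add_pull : ∀ {X' X A : 𝒞} (c c' : X' ⟶ X) (δ : E X A),
      pull (c + c') δ = pull c δ + pull c' δ
  add_push : ∀ {X A A' : 𝒞} (a a' : A ⟶ A') (δ : E X A),
      push (a + a') δ = push a δ + push a' δ
  IsTriangle : ∀ {A B X : 𝒞}, (A ⟶ B) → (B ⟶ X) → E X A → Prop
  realize_exists : ∀ {X A : 𝒞} (δ : E X A),
      ∃ (B : 𝒞) (x : A ⟶ B) (y : B ⟶ X), IsTriangle x y δ
  realize_zero : ∀ (A X : 𝒞),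
      IsTriangle (biprod.inl : A ⟶ A ⊞ X) (biprod.snd : A ⊞ X ⟶ X) (0 : E X A)
  realize_sum : ∀ {A B X A' B' X' : 𝒞} (x : A ⟶ B) (y : B ⟶ X) (δ : E X A)
      (x' : A' ⟶ B') (y' : B' ⟶ X') (δ' : E X' A'),
      IsTriangle x y δ → IsTriangle x' y' δ' →
      IsTriangle (biprod.map x x') (biprod.map y y')
        (push biprod.inl (pull biprod.fst δ) + push biprod.inr (pull biprod.snd δ'))
  realize_iso : ∀ {A B B' X : 𝒞} (x : A ⟶ B) (y : B ⟶ X) (δ : E X A) (b : B ≅ B'),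
      IsTriangle x y δ → IsTriangle (x ≫ b.hom) (b.inv ≫ y) δ
  realize_mor : ∀ {A B X A' B' X' : 𝒞} {x : A ⟶ B} {y : B ⟶ X} {δ : E X A}
      {x' : A' ⟶ B'} {y' : B' ⟶ X'} {δ' : E X' A'} (a : A ⟶ A') (c : X ⟶ X'),
      IsTriangle x y δ → IsTriangle x' y' δ' → push a δ = pull c δ' →
      ∃ b : B ⟶ B', x ≫ b = a ≫ x' ∧ y ≫ c = b ≫ y'
  ET3 : ∀ {A B X A' B' X' : 𝒞} {x : A ⟶ B} {y : B ⟶ X} {δ : E X A}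
      {x' : A' ⟶ B'} {y' : B' ⟶ X'} {δ' : E X' A'} (a : A ⟶ A') (b : B ⟶ B'),
      IsTriangle x y δ → IsTriangle x' y' δ' → x ≫ b = a ≫ x' →
      ∃ c : X ⟶ X', push a δ = pull c δ' ∧ y ≫ c = b ≫ y'
  ET3op : ∀ {A B X A' B' X' : 𝒞} {x : A ⟶ B} {y : B ⟶ X} {δ : E X A}
      {x' : A' ⟶ B'} {y' : B' ⟶ X'} {δ' : E X' A'} (b : B ⟶ B') (c : X ⟶ X'),
      IsTriangle x y δ → IsTriangle x' y' δ' → y ≫ c = b ≫ y' →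
      ∃ a : A ⟶ A', push a δ = pull c δ' ∧ x ≫ b = a ≫ x'
  ET4 : ∀ {A B D Cv F : 𝒞} (f : A ⟶ B) (f' : B ⟶ D) (δ : E D A)
      (g : B ⟶ Cv) (g' : Cv ⟶ F) (δ' : E F B),
      IsTriangle f f' δ → IsTriangle g g' δ' →
      ∃ (E₀ : 𝒞) (h : A ⟶ Cv) (h' : Cv ⟶ E₀) (d : D ⟶ E₀) (e : E₀ ⟶ F) (δ'' : E E₀ A),
        IsTriangle h h' δ'' ∧ IsTriangle d e (push f' δ') ∧
        h = f ≫ g ∧ f' ≫ d = g ≫ h' ∧ g' = h' ≫ e ∧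
        pull d δ'' = δ ∧ push f δ'' = pull e δ'
  ET4op : ∀ {D B A F Cv : 𝒞} (i : D ⟶ B) (p : B ⟶ A) (δ : E A D)
      (j : F ⟶ Cv) (q : Cv ⟶ B) (δ' : E B F),
      IsTriangle i p δ → IsTriangle j q δ' →
      ∃ (E₀ : 𝒞) (i' : E₀ ⟶ Cv) (p' : Cv ⟶ A) (m : F ⟶ E₀) (n : E₀ ⟶ D) (δ'' : E A E₀),
        IsTriangle i' p' δ'' ∧ IsTriangle m n (pull i δ') ∧
        p' = q ≫ p ∧ i' ≫ q = n ≫ i ∧ j = m ≫ i' ∧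
        push n δ'' = δ ∧ pull p δ'' = push m δ'

namespace ExtriangulatedStructure

variable {𝒞 : Type u} [Category.{v} 𝒞] [Preadditive 𝒞] [HasBinaryBiproducts 𝒞]
variable (S : ExtriangulatedStructure.{w} 𝒞)

/-- A morphism is an inflation if it occurs as the first map of some `E`-triangle. -/
def IsInflation {A B : 𝒞} (f : A ⟶ B) : Prop :=
  ∃ (X : 𝒞) (g : B ⟶ X) (δ : S.E X A), S.IsTriangle f g δ

/-- A morphism is a deflation if it occurs as the second map of some `E`-triangle. -/
def IsDeflation {B X : 𝒞} (g : B ⟶ X) : Prop :=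
  ∃ (A : 𝒞) (f : A ⟶ B) (δ : S.E X A), S.IsTriangle f g δ

/-- Condition (WIC). -/
def WIC : Prop :=
  (∀ {A B X : 𝒞} (f : A ⟶ B) (g : B ⟶ X), S.IsInflation (f ≫ g) → S.IsInflation f) ∧
  (∀ {A B X : 𝒞} (f : A ⟶ B) (g : B ⟶ X), S.IsDeflation (f ≫ g) → S.IsDeflation g)

/-- `(a, b, c)` is a morphism of `E`-triangles. -/
def IsTriangleMor {A B X A' B' X' : 𝒞} (x : A ⟶ B) (y : B ⟶ X) (δ : S.E X A)
    (x' : A' ⟶ B') (y' : B' ⟶ X') (δ' : S.E X' A')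
    (a : A ⟶ A') (b : B ⟶ B') (c : X ⟶ X') : Prop :=
  x ≫ b = a ≫ x' ∧ y ≫ c = b ≫ y' ∧ S.push a δ = S.pull c δ'

/-- A cotorsion pair `(𝒬, ℛ)`: `E(𝒬, ℛ) = 0` and every object admits the two
approximation `E`-triangles. -/
def CotorsionPair (𝒬 ℛ : Set 𝒞) : Prop :=
  (∀ (Q R : 𝒞), Q ∈ 𝒬 → R ∈ ℛ → ∀ δ : S.E Q R, δ = 0) ∧
  (∀ X : 𝒞, ∃ (R Q : 𝒞) (f : R ⟶ Q) (g : Q ⟶ X) (δ : S.E X R),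
      S.IsTriangle f g δ ∧ Q ∈ 𝒬 ∧ R ∈ ℛ) ∧
  (∀ X : 𝒞, ∃ (R Q : 𝒞) (f : X ⟶ R) (g : R ⟶ Q) (δ : S.E Q X),
      S.IsTriangle f g δ ∧ Q ∈ 𝒬 ∧ R ∈ ℛ)

/-- A cotorsion pair is hereditary if `𝒬` is closed under cocones of deflations and
`ℛ` is closed under cones of inflations. -/
def Hereditary (𝒬 ℛ : Set 𝒞) : Prop :=
  (∀ {A B X : 𝒞} (f : A ⟶ B) (g : B ⟶ X) (δ : S.E X A),
      S.IsTriangle f g δ → B ∈ 𝒬 → X ∈ 𝒬 → A ∈ 𝒬) ∧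
  (∀ {A B X : 𝒞} (f : A ⟶ B) (g : B ⟶ X) (δ : S.E X A),
      S.IsTriangle f g δ → A ∈ ℛ → B ∈ ℛ → X ∈ ℛ)

/-- A class of objects is thick: closed under direct summands and satisfying the
2-out-of-3 property on `E`-triangles. -/
def Thick (𝒲 : Set 𝒞) : Prop :=
  (∀ {X Y : 𝒞}, Y ∈ 𝒲 → (∃ (i : X ⟶ Y) (p : Y ⟶ X), i ≫ p = 𝟙 X) → X ∈ 𝒲) ∧
  (∀ {A B X : 𝒞} (f : A ⟶ B) (g : B ⟶ X) (δ : S.E X A), S.IsTriangle f g δ →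
    (A ∈ 𝒲 → B ∈ 𝒲 → X ∈ 𝒲) ∧ (A ∈ 𝒲 → X ∈ 𝒲 → B ∈ 𝒲) ∧ (B ∈ 𝒲 → X ∈ 𝒲 → A ∈ 𝒲))

/-- `(𝒬, 𝒲, ℛ)` is a Hovey triple. -/
def HoveyTriple (𝒬 𝒲 ℛ : Set 𝒞) : Prop :=
  S.Thick 𝒲 ∧ S.CotorsionPair 𝒬 (𝒲 ∩ ℛ) ∧ S.CotorsionPair (𝒬 ∩ 𝒲) ℛ

end ExtriangulatedStructure

/-!
The morphism `(a, b, c)` is replaced by a composite of two morphisms of `E`-triangles through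
a realization `A' → E → X` of `a_* δ = c^* δ'`.

The first factor comes from the pushout conflation `A → A' ⊕ B → E` given by (ET4); its
component `B → E` becomes a deflation after precomposition with the deflation `a ⊕ 1_B`,
hence is a deflation by (WIC).

For the second factor, let `F → X → X'` be a conflation with deflation `c`. By (ET4)ᵒᵖ the
composite `E → X → X'` is a deflation whose cocone is an extension of `F` by `A'` with class
`f^* c^* δ' = 0`, hence is `A' ⊕ F`. Exactness of `Hom(F, A') → E(X', A') → E(X, A')` makes
the class of the resulting conflation `A' ⊕ F → E → X'`, pushed along a suitable projection
`A' ⊕ F → A'`, equal to `δ'`; (ET4) then yields a deflation `E → B'`.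
-/

namespace ExtriangulatedStructure

variable {𝒞 : Type u} [Category.{v} 𝒞] [Preadditive 𝒞] [HasBinaryBiproducts 𝒞]
variable (S : ExtriangulatedStructure.{w} 𝒞)

section Additivity

variable {A A' X X' : 𝒞}

lemma pull_zero (c : X' ⟶ X) : S.pull c (0 : S.E X A) = 0 :=
  (AddMonoidHom.mk' (S.pull c) (S.pull_add c)).map_zero

lemma push_zero (a : A ⟶ A') : S.push a (0 : S.E X A) = 0 :=
  (AddMonoidHom.mk' (S.push a) (S.push_add a)).map_zero

lemma zero_pull (δ : S.E X A) : S.pull (0 : X' ⟶ X) δ = 0 :=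
  (AddMonoidHom.mk' (S.pull · δ) (S.add_pull · · δ)).map_zero

lemma pull_sub (c : X' ⟶ X) (δ δ' : S.E X A) :
    S.pull c (δ - δ') = S.pull c δ - S.pull c δ' :=
  (AddMonoidHom.mk' (S.pull c) (S.pull_add c)).map_sub δ δ'

lemma neg_push (a : A ⟶ A') (δ : S.E X A) : S.push (-a) δ = -S.push a δ :=
  (AddMonoidHom.mk' (S.push · δ) (S.add_push · · δ)).map_neg a

lemma push_biprod_desc {A₁ A₂ : 𝒞} (u : A₁ ⟶ A') (v : A₂ ⟶ A') (θ : S.E X (A₁ ⊞ A₂)) :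
    S.push (biprod.desc u v) θ =
      S.push u (S.push biprod.fst θ) + S.push v (S.push biprod.snd θ) := by
  rw [← S.push_comp, ← S.push_comp, ← S.add_push, biprod.desc_eq]

end Additivity

section Triangles

variable {S} {A B X : 𝒞} {x : A ⟶ B} {y : B ⟶ X} {δ : S.E X A}

lemma comp_eq_zero (hT : S.IsTriangle x y δ) : x ≫ y = 0 := by
  obtain ⟨b, hb₁, hb₂⟩ := S.realize_mor (𝟙 A) (0 : X ⟶ X) (S.realize_zero A X) hT
    (by rw [S.push_id, S.zero_pull])
  rw [Category.id_comp] at hb₁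
  rw [← hb₁, Category.assoc, ← hb₂, comp_zero, comp_zero]

lemma push_eq_zero (hT : S.IsTriangle x y δ) : S.push x δ = 0 := by
  obtain ⟨c, hc, -⟩ := S.ET3 x (biprod.inl : B ⟶ B ⊞ B) hT (S.realize_zero B B) rfl
  rw [hc, S.pull_zero]

lemma exists_comp_eq_of_comp_eq_zero (hT : S.IsTriangle x y δ) {T : 𝒞} (g : B ⟶ T)
    (hg : x ≫ g = 0) : ∃ h : X ⟶ T, y ≫ h = g := by
  obtain ⟨h, -, hh⟩ := S.ET3 x (biprod.lift (𝟙 B) g) hT (S.realize_zero B T)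
    (by apply biprod.hom_ext <;> simp [hg])
  exact ⟨h, by rw [hh, biprod.lift_snd]⟩

lemma exists_push_eq_of_pull_eq_zero {A' : 𝒞} (hT : S.IsTriangle x y δ) (θ : S.E X A')
    (hθ : S.pull y θ = 0) : ∃ h : A ⟶ A', θ = S.push h δ := by
  obtain ⟨_, s, t, hθT⟩ := S.realize_exists θ
  obtain ⟨b, -, hb⟩ := S.realize_mor (𝟙 A') y (S.realize_zero A' B) hθT
    (by rw [S.push_id, hθ])
  obtain ⟨h, hh, -⟩ := S.ET3op (biprod.inr ≫ b) (𝟙 X) hT hθT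
    (by rw [Category.comp_id, Category.assoc, ← hb, biprod.inr_snd_assoc])
  rw [S.pull_id] at hh
  exact ⟨h, hh.symm⟩

lemma isZero_of_isTriangle_id {W : 𝒞} {w : A ⟶ W} {δ : S.E W A}
    (hT : S.IsTriangle (𝟙 A) w δ) : IsZero W := by
  have hw : w = 0 := by simpa using comp_eq_zero hT
  obtain ⟨p, -, hp⟩ := S.realize_mor (𝟙 A) (𝟙 W) (S.realize_zero A W) hT
    (by rw [S.pull_id, ← push_eq_zero hT, S.push_id, S.push_id])
  have hsnd : (biprod.snd : A ⊞ W ⟶ W) = 0 := by simpa [hw] using hp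
  rw [IsZero.iff_id_eq_zero, ← biprod.inr_snd, hsnd, comp_zero]

/-- `1 - w` factors through `y` and is killed by `y`, so it squares to zero. -/
lemma isIso_of_comp_eq_of_comp_eq (hT : S.IsTriangle x y δ) (w : B ⟶ B) (hx : x ≫ w = x)
    (hy : w ≫ y = y) : IsIso w := by
  obtain ⟨h, hh⟩ := exists_comp_eq_of_comp_eq_zero hT (𝟙 B - w)
    (by rw [Preadditive.comp_sub, Category.comp_id, hx, sub_self])
  have hsq : (𝟙 B - w) ≫ (𝟙 B - w) = 0 := by
    nth_rw 2 [← hh]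
    rw [← Category.assoc, Preadditive.sub_comp, Category.id_comp, hy, sub_self, zero_comp]
  have hww : w ≫ w = w + w - 𝟙 B := by
    simp only [Preadditive.sub_comp, Preadditive.comp_sub, Category.id_comp,
      Category.comp_id] at hsq
    rw [← sub_eq_zero, ← hsq]
    abel
  refine ⟨𝟙 B + (𝟙 B - w), ?_, ?_⟩
  · simp only [Preadditive.comp_add, Preadditive.comp_sub, Category.comp_id, hww]
    abel
  · simp only [Preadditive.add_comp, Preadditive.sub_comp, Category.id_comp, hww]
    abel

end Triangles

section Morphisms

variable {S} {A₁ B₁ X₁ A₂ B₂ X₂ A₃ B₃ X₃ : 𝒞}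
  {x₁ : A₁ ⟶ B₁} {y₁ : B₁ ⟶ X₁} {δ₁ : S.E X₁ A₁}
  {x₂ : A₂ ⟶ B₂} {y₂ : B₂ ⟶ X₂} {δ₂ : S.E X₂ A₂}
  {x₃ : A₃ ⟶ B₃} {y₃ : B₃ ⟶ X₃} {δ₃ : S.E X₃ A₃}

lemma IsTriangleMor.comp {a₁ : A₁ ⟶ A₂} {b₁ : B₁ ⟶ B₂} {c₁ : X₁ ⟶ X₂}
    {a₂ : A₂ ⟶ A₃} {b₂ : B₂ ⟶ B₃} {c₂ : X₂ ⟶ X₃}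
    (h₁ : S.IsTriangleMor x₁ y₁ δ₁ x₂ y₂ δ₂ a₁ b₁ c₁)
    (h₂ : S.IsTriangleMor x₂ y₂ δ₂ x₃ y₃ δ₃ a₂ b₂ c₂) :
    S.IsTriangleMor x₁ y₁ δ₁ x₃ y₃ δ₃ (a₁ ≫ a₂) (b₁ ≫ b₂) (c₁ ≫ c₂) := by
  obtain ⟨hx₁, hy₁, hδ₁⟩ := h₁
  obtain ⟨hx₂, hy₂, hδ₂⟩ := h₂
  refine ⟨by rw [reassoc_of% hx₁, hx₂, Category.assoc],
    by rw [reassoc_of% hy₁, hy₂, Category.assoc], ?_⟩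
  rw [S.push_comp, hδ₁, ← S.pull_push, hδ₂, S.pull_comp]

lemma isIso_of_isTriangleMor (hT₁ : S.IsTriangle x₁ y₁ δ₁) (hT₂ : S.IsTriangle x₂ y₂ δ₂)
    {a : A₁ ⟶ A₂} {b : B₁ ⟶ B₂} {c : X₁ ⟶ X₂} [IsIso a] [IsIso c]
    (h : S.IsTriangleMor x₁ y₁ δ₁ x₂ y₂ δ₂ a b c) : IsIso b := by
  obtain ⟨hx, hy, hδ⟩ := h
  have hδ' : S.push (inv a) δ₂ = S.pull (inv c) δ₁ := calc
    S.push (inv a) δ₂ = S.push (inv a) (S.pull (inv c ≫ c) δ₂) := by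
      rw [IsIso.inv_hom_id, S.pull_id]
    _ = S.pull (inv c) (S.push (inv a) (S.pull c δ₂)) := by rw [S.pull_comp, S.pull_push]
    _ = S.pull (inv c) δ₁ := by rw [← hδ, ← S.push_comp, IsIso.hom_inv_id, S.push_id]
  obtain ⟨b', hx', hy'⟩ := S.realize_mor (inv a) (inv c) hT₂ hT₁ hδ'
  have : IsIso (b ≫ b') := isIso_of_comp_eq_of_comp_eq hT₁ _
    (by rw [reassoc_of% hx, hx', IsIso.hom_inv_id_assoc])
    (by rw [Category.assoc, ← hy', ← reassoc_of% hy, IsIso.hom_inv_id, Category.comp_id])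
  have : IsIso (b' ≫ b) := isIso_of_comp_eq_of_comp_eq hT₂ _
    (by rw [reassoc_of% hx', hx, IsIso.inv_hom_id_assoc])
    (by rw [Category.assoc, ← hy, ← reassoc_of% hy', IsIso.inv_hom_id, Category.comp_id])
  have : Mono b := mono_of_mono b b'
  have : IsSplitEpi b := ⟨⟨inv (b' ≫ b) ≫ b', by simp⟩⟩
  exact isIso_of_mono_of_isSplitEpi b

lemma exists_isIso_of_isTriangle {x₂ : A₁ ⟶ B₂} {y₂ : B₂ ⟶ X₁}
    (hT₁ : S.IsTriangle x₁ y₁ δ₁) (hT₂ : S.IsTriangle x₂ y₂ δ₁) :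
    ∃ u : B₁ ⟶ B₂, IsIso u ∧ x₁ ≫ u = x₂ ∧ u ≫ y₂ = y₁ := by
  obtain ⟨u, hx, hy⟩ := S.realize_mor (𝟙 A₁) (𝟙 X₁) hT₁ hT₂ (by rw [S.push_id, S.pull_id])
  refine ⟨u, isIso_of_isTriangleMor hT₁ hT₂ ⟨hx, hy, by rw [S.push_id, S.pull_id]⟩, ?_, ?_⟩
  · simpa using hx
  · simpa using hy.symm

lemma IsTriangle.of_iso_right (hT : S.IsTriangle x₁ y₁ δ₁) (γ : X₁ ≅ X₂) :
    S.IsTriangle x₁ (y₁ ≫ γ.hom) (S.pull γ.inv δ₁) := by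
  obtain ⟨_, s, t, hQ⟩ := S.realize_exists (S.pull γ.inv δ₁)
  have hδ : S.push (𝟙 A₁) δ₁ = S.pull γ.hom (S.pull γ.inv δ₁) := by
    rw [S.push_id, ← S.pull_comp, γ.hom_inv_id, S.pull_id]
  obtain ⟨β, hx, hy⟩ := S.realize_mor (𝟙 A₁) γ.hom hT hQ hδ
  have : IsIso β := isIso_of_isTriangleMor hT hQ ⟨hx, hy, hδ⟩
  have h := S.realize_iso s t _ (asIso β).symm hQ
  rw [Category.id_comp] at hx
  simpa [← hx, ← hy] using h

lemma IsTriangle.of_iso_left (hT : S.IsTriangle x₁ y₁ δ₁) (α : A₁ ≅ A₂) :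
    S.IsTriangle (α.inv ≫ x₁) y₁ (S.push α.hom δ₁) := by
  obtain ⟨_, s, t, hQ⟩ := S.realize_exists (S.push α.hom δ₁)
  have hδ : S.push α.hom δ₁ = S.pull (𝟙 X₁) (S.push α.hom δ₁) := by rw [S.pull_id]
  obtain ⟨β, hx, hy⟩ := S.realize_mor α.hom (𝟙 X₁) hT hQ hδ
  have : IsIso β := isIso_of_isTriangleMor hT hQ ⟨hx, hy, hδ⟩
  have h := S.realize_iso s t _ (asIso β).symm hQ
  have hs : s ≫ inv β = α.inv ≫ x₁ := by
    rw [← cancel_mono β, Category.assoc, IsIso.inv_hom_id, Category.comp_id, Category.assoc, hx,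
      Iso.inv_hom_id_assoc]
  rw [Category.comp_id] at hy
  simpa [hs, ← hy] using h

end Morphisms

section Deflations

variable {S}

lemma isInflation_id (hWIC : S.WIC) (A : 𝒞) : S.IsInflation (𝟙 A) :=
  hWIC.1 (𝟙 A) biprod.inl (by rw [Category.id_comp]; exact ⟨A, _, _, S.realize_zero A A⟩)

lemma isDeflation_id (hWIC : S.WIC) (A : 𝒞) : S.IsDeflation (𝟙 A) :=
  hWIC.2 biprod.snd (𝟙 A) (by rw [Category.comp_id]; exact ⟨A, _, _, S.realize_zero A A⟩)

lemma isDeflation_of_isIso (hWIC : S.WIC) {A B : 𝒞} (u : A ⟶ B) [IsIso u] :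
    S.IsDeflation u :=
  hWIC.2 (inv u) u (by rw [IsIso.inv_hom_id]; exact isDeflation_id hWIC B)

lemma IsDeflation.comp {A B X : 𝒞} {q : A ⟶ B} {p : B ⟶ X} (hq : S.IsDeflation q)
    (hp : S.IsDeflation p) : S.IsDeflation (q ≫ p) := by
  obtain ⟨_, j, _, hTq⟩ := hq
  obtain ⟨_, i, _, hTp⟩ := hp
  obtain ⟨_, i', _, _, _, _, hT, -, hp', -⟩ := S.ET4op i p _ j q _ hTp hTq
  exact ⟨_, i', _, hp' ▸ hT⟩

lemma IsDeflation.biprod_map {A B X Y : 𝒞} {p : A ⟶ X} {q : B ⟶ Y} (hp : S.IsDeflation p)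
    (hq : S.IsDeflation q) : S.IsDeflation (biprod.map p q) := by
  obtain ⟨_, i, _, hTp⟩ := hp
  obtain ⟨_, j, _, hTq⟩ := hq
  exact ⟨_, _, _, S.realize_sum _ _ _ _ _ _ hTp hTq⟩

end Deflations

section SplitTriangles

lemma isTriangle_biprod_lift_desc {P Q : 𝒞} (g : P ⟶ Q) :
    S.IsTriangle (biprod.lift (-g) (𝟙 P)) (biprod.desc (𝟙 Q) g) (0 : S.E Q P) := by
  have h := S.realize_iso _ _ _ ⟨biprod.desc (biprod.lift (-g) (𝟙 P)) biprod.inl,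
    biprod.lift biprod.snd (biprod.desc (𝟙 Q) g), by ext <;> simp, by ext <;> simp⟩
    (S.realize_zero P Q)
  simpa using h

variable {S}

lemma isTriangle_biprod_map_id (hWIC : S.WIC) {A B X : 𝒞} {x : A ⟶ B} {y : B ⟶ X}
    {δ : S.E X A} (hT : S.IsTriangle x y δ) (A' : 𝒞) :
    S.IsTriangle (biprod.map (𝟙 A') x) (biprod.snd ≫ y) (S.push biprod.inr δ) := by
  obtain ⟨W, w, δ₀, hT₀⟩ := S.isInflation_id hWIC A'
  have h := (S.realize_sum _ _ _ _ _ _ hT₀ hT).of_iso_right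
    (isoZeroBiprod (isZero_of_isTriangle_id hT₀)).symm
  have hδ : S.pull biprod.inr
      (S.push biprod.inl (S.pull biprod.fst δ₀) + S.push biprod.inr (S.pull biprod.snd δ)) =
      S.push biprod.inr δ := by
    rw [S.pull_add, S.pull_push, S.pull_push, ← S.pull_comp, ← S.pull_comp, biprod.inr_fst,
      biprod.inr_snd, S.zero_pull, S.pull_id, S.push_zero, zero_add]
  simpa [isoZeroBiprod, hδ] using h

end SplitTriangles

section Factorization

variable {S} {A B X A' B' X' : 𝒞} {x : A ⟶ B} {y : B ⟶ X} {δ : S.E X A}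

lemma exists_isDeflation_isTriangleMor_push (hWIC : S.WIC) (hT : S.IsTriangle x y δ)
    {a : A ⟶ A'} (ha : S.IsDeflation a) :
    ∃ (E : 𝒞) (x₁ : A' ⟶ E) (y₁ : E ⟶ X) (b₁ : B ⟶ E), S.IsTriangle x₁ y₁ (S.push a δ) ∧
      S.IsDeflation b₁ ∧ S.IsTriangleMor x y δ x₁ y₁ (S.push a δ) a b₁ (𝟙 X) := by
  obtain ⟨E, _, h', d, e, _, hTh, hTde, -, hd, he, -, -⟩ :=
    S.ET4 _ _ _ _ _ _ (S.isTriangle_biprod_lift_desc a) (isTriangle_biprod_map_id hWIC hT A')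
  rw [← S.push_comp, biprod.inr_desc] at hTde
  have hinl : biprod.inl ≫ h' = d := by simpa using (biprod.inl ≫= hd).symm
  have hx : x ≫ biprod.inr ≫ h' = a ≫ d := by simpa using (biprod.inr ≫= hd).symm
  have hfactor : biprod.map a (𝟙 B) ≫ h' = biprod.desc x (𝟙 B) ≫ biprod.inr ≫ h' := by
    ext <;> simp [hinl, hx]
  refine ⟨E, d, e, biprod.inr ≫ h', hTde, hWIC.2 (biprod.desc x (𝟙 B)) _ ?_, hx,
    by rw [Category.comp_id, Category.assoc, ← he, biprod.inr_snd_assoc], (S.pull_id _).symm⟩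
  rw [← hfactor]
  exact (ha.biprod_map (isDeflation_id hWIC B)).comp ⟨_, _, _, hTh⟩

lemma exists_isTriangle_biprod_comp {F : 𝒞} {f : F ⟶ X} {c : X ⟶ X'} {ε : S.E X' F}
    (hTc : S.IsTriangle f c ε) {x₁ : A' ⟶ B} {y₁ : B ⟶ X} {δ₁ : S.E X A'}
    (hT₁ : S.IsTriangle x₁ y₁ δ₁) (hδ₁ : S.pull f δ₁ = 0) :
    ∃ (g : A' ⊞ F ⟶ B) (θ : S.E X' (A' ⊞ F)), S.IsTriangle g (y₁ ≫ c) θ ∧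
      biprod.inl ≫ g = x₁ ∧ S.push biprod.snd θ = ε ∧ S.pull c θ = S.push biprod.inl δ₁ := by
  obtain ⟨_, i', _, m, n, θ, hT, hmn, hp, -, hx₁, hn, hc⟩ := S.ET4op f c ε x₁ y₁ δ₁ hTc hT₁
  rw [hδ₁] at hmn
  obtain ⟨v, _, hmv, hvn⟩ := exists_isIso_of_isTriangle hmn (S.realize_zero A' F)
  refine ⟨inv v ≫ i', S.push v θ, by simpa [hp] using hT.of_iso_left (asIso v), ?_, ?_, ?_⟩
  · rw [hx₁, ← hmv, Category.assoc, IsIso.hom_inv_id_assoc]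
  · rw [← S.push_comp, hvn, hn]
  · rw [S.pull_push, hc, ← S.push_comp, hmv]

lemma exists_isDeflation_isTriangleMor_pull (hWIC : S.WIC) {x₁ : A' ⟶ B} {y₁ : B ⟶ X}
    {c : X ⟶ X'} {x' : A' ⟶ B'} {y' : B' ⟶ X'} {δ' : S.E X' A'}
    (hT₁ : S.IsTriangle x₁ y₁ (S.pull c δ')) (hT' : S.IsTriangle x' y' δ')
    (hc : S.IsDeflation c) :
    ∃ b₂ : B ⟶ B', S.IsDeflation b₂ ∧
      S.IsTriangleMor x₁ y₁ (S.pull c δ') x' y' δ' (𝟙 A') b₂ c := by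
  obtain ⟨F, f, ε, hTc⟩ := hc
  obtain ⟨g, θ, hTg, hg, hθε, hθc⟩ := exists_isTriangle_biprod_comp hTc hT₁
    (by rw [← S.pull_comp, comp_eq_zero hTc, S.zero_pull])
  obtain ⟨h, hh⟩ := exists_push_eq_of_pull_eq_zero hTc (S.push biprod.fst θ - δ')
    (by rw [S.pull_sub, S.pull_push, hθc, ← S.push_comp, biprod.inl_fst, S.push_id, sub_self])
  obtain ⟨E, _, h', d, e, _, hTh, hTde, -, hd, he, -, -⟩ :=
    S.ET4 _ _ _ _ _ _ (S.isTriangle_biprod_lift_desc (-h)) hTg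
  have hδ' : S.push (biprod.desc (𝟙 A') (-h)) θ = δ' := by
    rw [push_biprod_desc, S.push_id, hθε, S.neg_push, ← hh]
    abel
  rw [hδ'] at hTde
  obtain ⟨u, _, hdu, hue⟩ := exists_isIso_of_isTriangle hTde hT'
  refine ⟨h' ≫ u, IsDeflation.comp ⟨_, _, _, hTh⟩ (isDeflation_of_isIso hWIC u), ?_, ?_,
    S.push_id _⟩
  · rw [Category.id_comp, ← hdu, ← hg, Category.assoc, ← reassoc_of% hd,
      biprod.inl_desc_assoc, Category.id_comp]
  · rw [he, Category.assoc, hue]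

end Factorization

end ExtriangulatedStructure

open CategoryTheory Limits in
/-- under (WIC), in a morphism of E-triangles `(a, b, c)` with `a` and `c`
deflations, there exists a deflation `b'` making `(a, b', c)` a morphism of E-triangles. -/
theorem stmt2 {𝒞 : Type u} [Category.{v} 𝒞] [Preadditive 𝒞] [HasBinaryBiproducts 𝒞]
    (S : ExtriangulatedStructure.{w} 𝒞) (hWIC : S.WIC)
    {A B X A' B' X' : 𝒞} (x : A ⟶ B) (y : B ⟶ X) (δ : S.E X A)
    (x' : A' ⟶ B') (y' : B' ⟶ X') (δ' : S.E X' A')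
    (hT : S.IsTriangle x y δ) (hT' : S.IsTriangle x' y' δ')
    (a : A ⟶ A') (b : B ⟶ B') (c : X ⟶ X')
    (hmor : S.IsTriangleMor x y δ x' y' δ' a b c)
    (ha : S.IsDeflation a) (hc : S.IsDeflation c) :
    ∃ b' : B ⟶ B', S.IsDeflation b' ∧ S.IsTriangleMor x y δ x' y' δ' a b' c := by
  obtain ⟨-, -, hδ⟩ := hmor
  obtain ⟨E, x₁, y₁, b₁, hT₁, hb₁, hmor₁⟩ :=
    ExtriangulatedStructure.exists_isDeflation_isTriangleMor_push hWIC hT ha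
  rw [hδ] at hT₁ hmor₁
  obtain ⟨b₂, hb₂, hmor₂⟩ :=
    ExtriangulatedStructure.exists_isDeflation_isTriangleMor_pull hWIC hT₁ hT' hc
  refine ⟨b₁ ≫ b₂, hb₁.comp hb₂, ?_⟩
  simpa using hmor₁.comp hmor₂
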